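/- arXiv:1007.4371 — 2 statements merged into one kernel-verified Lean document; each statement's English description precedes it below -/
import Mathlib

section
/- Spencer weight splitting identity: given a game state v = (V_0, …, V_t) with question vector u = (U_0, …, U_t) where U_i ⊆ V_i for all i, and remaining-questions parameter r = n - j ≥ 1, the sum of the Spencer weights (computed with parameter r-1) of the 'Yes' state ((U_0, U_1 ∪ (V_0 \ U_0), …, U_t ∪ (V_{t-1} \ U_{t-1}))) and the 'No' state ((V_0 \ U_0, (V_1 \ U_1) ∪ U_0, …, (V_t \ U_t) ∪ U_{t-1})) equals the Spencer weight of v computed with parameter r. -/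
/-- Spencer weight with `r` questions remaining of a state with bins `v 0, …, v t`. -/
def spencerWeight {α : Type*} [DecidableEq α] (t r : ℕ) (v : ℕ → Finset α) : ℕ :=
  ∑ i ∈ Finset.range (t + 1), (v i).card * ∑ ℓ ∈ Finset.range (t - i + 1), r.choose ℓ

/-- Update of a state after a "Yes" answer to the question `u`. -/
def yesState {α : Type*} [DecidableEq α] (v u : ℕ → Finset α) : ℕ → Finset α :=
  fun i => if i = 0 then u 0 else u i ∪ (v (i - 1) \ u (i - 1))

/-- Update of a state after a "No" answer to the question `u`. -/
def noState {α : Type*} [DecidableEq α] (v u : ℕ → Finset α) : ℕ → Finset α :=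
  fun i => if i = 0 then v 0 \ u 0 else (v i \ u i) ∪ u (i - 1)

/-! Pascal's rule writes the coefficient `∑_{ℓ ≤ t-i} C(r, ℓ)` of bin `i` in `W_r` as the
coefficient of bin `i` in `W_{r-1}` plus that of bin `i + 1`. On the other side, every chip of
`V_i` sits at level `i` in one of the two answer states and at level `i + 1` in the other, so the
two states together count each bin `V_i` once at level `i` and once at level `i + 1`. -/

open Finset

theorem Nat.sum_range_succ_choose_succ (m k : ℕ) :
    ∑ ℓ ∈ range (k + 1), (m + 1).choose ℓ
      = ∑ ℓ ∈ range (k + 1), m.choose ℓ + ∑ ℓ ∈ range k, m.choose ℓ := by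
  induction k with
  | zero => simp
  | succ k ih =>
    rw [sum_range_succ, ih, sum_range_succ (m.choose ·) (k + 1), sum_range_succ (m.choose ·) k,
      Nat.choose_succ_succ]
    ring

theorem sum_range_mul_of_eq_add_shift {R : Type*} [NonUnitalNonAssocSemiring R]
    (t : ℕ) (c w B : ℕ → R) (hB : B 0 = 0)
    (hc₀ : c 0 = w 0) (hc : ∀ i, c (i + 1) = w (i + 1) + w i) :
    ∑ i ∈ range (t + 1), c i * B (t - i + 1)
      = ∑ i ∈ range (t + 1), w i * (B (t - i + 1) + B (t - i)) := by
  have hsucc : ∑ i ∈ range t, c (i + 1) * B (t - (i + 1) + 1)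
      = ∑ i ∈ range t, (w (i + 1) * B (t - (i + 1) + 1) + w i * B (t - i)) :=
    sum_congr rfl fun i hi => by
      rw [hc, add_mul, show t - (i + 1) + 1 = t - i by have := mem_range.mp hi; omega]
  simp only [mul_add, sum_add_distrib]
  rw [sum_range_succ', hsucc, hc₀, sum_add_distrib, sum_range_succ' (fun i => w i * B (t - i + 1)),
    sum_range_succ (fun i => w i * B (t - i)), Nat.sub_self, hB, mul_zero, add_zero]
  abel

section

variable {α : Type*} [DecidableEq α] (v u : ℕ → Finset α)

theorem card_yesState_zero_add_card_noState_zero (h₀ : u 0 ⊆ v 0) :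
    (yesState v u 0).card + (noState v u 0).card = (v 0).card := by
  simp only [yesState, noState, if_pos]
  rw [add_comm, card_sdiff_add_card_eq_card h₀]

theorem card_yesState_succ_add_card_noState_succ (i : ℕ) (hdisj : Disjoint (v (i + 1)) (v i))
    (hi : u i ⊆ v i) (hsucc : u (i + 1) ⊆ v (i + 1)) :
    (yesState v u (i + 1)).card + (noState v u (i + 1)).card
      = (v (i + 1)).card + (v i).card := by
  simp only [yesState, noState, Nat.add_one_ne_zero, if_false, Nat.add_sub_cancel]
  rw [card_union_of_disjoint (hdisj.mono hsucc sdiff_subset),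
    card_union_of_disjoint (hdisj.mono sdiff_subset hi),
    ← card_sdiff_add_card_eq_card hi, ← card_sdiff_add_card_eq_card hsucc]
  ring

end

/-- Spencer weight splitting identity: the Spencer weights (with parameter `r-1`)
of the Yes-state and the No-state sum to the Spencer weight of `v` with parameter `r`. -/
theorem spencer_weight_split {α : Type*} [DecidableEq α] (t r : ℕ) (hr : 1 ≤ r)
    (v u : ℕ → Finset α)
    (hdisj : ∀ i j, i ≠ j → Disjoint (v i) (v j))
    (hsub : ∀ i, u i ⊆ v i) :
    spencerWeight t (r - 1) (yesState v u) + spencerWeight t (r - 1) (noState v u)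
      = spencerWeight t r v := by
  obtain ⟨s, rfl⟩ : ∃ s, r = s + 1 := ⟨r - 1, by omega⟩
  simp only [spencerWeight, Nat.add_sub_cancel, ← sum_add_distrib, ← add_mul,
    Nat.sum_range_succ_choose_succ]
  exact sum_range_mul_of_eq_add_shift t _ _ (fun k => ∑ ℓ ∈ range k, s.choose ℓ) rfl
    (card_yesState_zero_add_card_noState_zero v u (hsub 0))
    (fun i => card_yesState_succ_add_card_noState_succ v u i (hdisj _ _ (by omega))
      (hsub i) (hsub (i + 1)))
end

section
/- Divisibility/congruence invariant of the Spencer weight: let A_r = gcd{C(r, t), C(r, t-1), …, C(r, t-s+1)} for appropriate s (in the paper, A_{n-i} = gcd{C(n-i, t), …, C(n-i, t-i+1)}). Then for every reachable state v_i after i answers of an (m,t,n)-game, W_{n-i}(v_i) ≡ m · ∑_{ℓ=0}^{t} C(n-i, ℓ) (mod A_{n-i}). -/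
/-- States reachable from the initial state `v0` after `i` answers. -/
inductive Reachable {α : Type*} [DecidableEq α] (v0 : ℕ → Finset α) :
    ℕ → (ℕ → Finset α) → Prop
  | init : Reachable v0 0 v0
  | yes {i : ℕ} {v u : ℕ → Finset α} (h : Reachable v0 i v) (hu : ∀ j, u j ⊆ v j) :
      Reachable v0 (i + 1) (yesState v u)
  | no {i : ℕ} {v u : ℕ → Finset α} (h : Reachable v0 i v) (hu : ∀ j, u j ⊆ v j) :
      Reachable v0 (i + 1) (noState v u)

/-!
Write `N_s(v) = |V_0| + ⋯ + |V_s|`. Summing by parts, `W_r(v) = ∑_{s ≤ t} C(r, t-s) N_s(v)`.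
Both answers have the same shape: every element of `V_j` either stays in bin `j` or moves up
to bin `j + 1`, so `N_s` drops by exactly the number of elements leaving bin `s`, and the weight
drops by `∑_s C(r, t-s) · #(elements leaving bin s)`. After `i` answers only bins `0, …, i` are
occupied, so the `(i+1)`-st answer changes the weight by a multiple of
`gcd{C(r, t), …, C(r, t-i)}`, and the invariant follows by induction from `W_r(v_0) = m ∑_ℓ C(r, ℓ)`.
-/

section

open Finset Function

variable {α : Type*}

def initialState (S : Finset α) : ℕ → Finset α := fun j => if j = 0 then S else ∅

theorem pairwise_disjoint_initialState (S : Finset α) : Pairwise (Disjoint on initialState S) := by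
  intro j k hjk
  rcases eq_or_ne j 0 with rfl | hj
  · simp [onFun, initialState, Ne.symm hjk]
  · simp [onFun, initialState, hj]

variable [DecidableEq α]

/-- The elements of `a j` move up to bin `j + 1`, those of `b j` stay in bin `j`: `yesState v u`
is the case `a = v \ u`, `b = u`, and `noState v u` the case `a = u`, `b = v \ u`. -/
def shiftState (a b : ℕ → Finset α) : ℕ → Finset α :=
  fun j => if j = 0 then b 0 else b j ∪ a (j - 1)

theorem mem_shiftState {a b : ℕ → Finset α} {j : ℕ} {x : α} :
    x ∈ shiftState a b j ↔ x ∈ b j ∨ (j ≠ 0 ∧ x ∈ a (j - 1)) := by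
  rcases eq_or_ne j 0 with rfl | hj <;> simp [shiftState, *]

theorem shiftState_eq_empty {a b : ℕ → Finset α} {k : ℕ} (h : ∀ j, k < j → a j ∪ b j = ∅)
    {j : ℕ} (hj : k + 1 < j) : shiftState a b j = ∅ := by
  have hb := (union_eq_empty.mp (h j (by omega))).2
  have ha := (union_eq_empty.mp (h (j - 1) (by omega))).1
  simp [shiftState, show j ≠ 0 by omega, ha, hb]

theorem pairwise_disjoint_shiftState {a b : ℕ → Finset α} (hab : ∀ j, Disjoint (a j) (b j))
    (hd : Pairwise (Disjoint on fun j => a j ∪ b j)) : Pairwise (Disjoint on shiftState a b) := by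
  intro j k hjk
  rw [onFun, disjoint_left]
  intro x hj hk
  have same_bin {p q : ℕ} (hp : x ∈ a p ∪ b p) (hq : x ∈ a q ∪ b q) : p = q :=
    by_contra fun h => disjoint_left.mp (hd h) hp hq
  rw [mem_shiftState] at hj hk
  rcases hj with hj | ⟨hj0, hj⟩ <;> rcases hk with hk | ⟨hk0, hk⟩
  · exact hjk (same_bin (mem_union_right _ hj) (mem_union_right _ hk))
  · have h := same_bin (mem_union_right _ hj) (mem_union_left _ hk)
    exact disjoint_left.mp (hab j) (h ▸ hk) hj
  · have h := same_bin (mem_union_left _ hj) (mem_union_right _ hk)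
    exact disjoint_left.mp (hab k) (h ▸ hj) hk
  · exact hjk (by have := same_bin (mem_union_left _ hj) (mem_union_left _ hk); omega)

theorem spencerWeight_eq_sum_choose_mul (t r : ℕ) (v : ℕ → Finset α) :
    spencerWeight t r v =
      ∑ s ∈ range (t + 1), r.choose (t - s) * ∑ j ∈ range (s + 1), #(v j) := by
  have reflect (j : ℕ) (hj : j ≤ t) :
      ∑ ℓ ∈ range (t - j + 1), r.choose ℓ = ∑ s ∈ Ico j (t + 1), r.choose (t - s) := by
    rw [sum_Ico_reflect _ _ le_rfl, Nat.sub_self, ← range_eq_Ico, Nat.sub_add_comm hj]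
  calc spencerWeight t r v
      = ∑ j ∈ range (t + 1), ∑ s ∈ Ico j (t + 1), #(v j) * r.choose (t - s) := by
        refine sum_congr rfl fun j hj => ?_
        rw [reflect j (mem_range_succ_iff.mp hj), mul_sum]
    _ = ∑ s ∈ range (t + 1), ∑ j ∈ range (s + 1), #(v j) * r.choose (t - s) :=
        sum_comm' (by intro j s; simp only [mem_range, mem_Ico]; omega)
    _ = _ := by simp only [mul_sum, mul_comm]

theorem sum_card_shiftState_add_card {a b : ℕ → Finset α} (hab : ∀ j, Disjoint (a j) (b j))
    (hba : ∀ j, Disjoint (a j) (b (j + 1))) (s : ℕ) :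
    ∑ j ∈ range (s + 1), #(shiftState a b j) + #(a s) = ∑ j ∈ range (s + 1), #(a j ∪ b j) := by
  induction s with
  | zero => simp [shiftState, card_union_of_disjoint (hab 0), add_comm]
  | succ s ih =>
    have hcard : #(shiftState a b (s + 1)) = #(b (s + 1)) + #(a s) := by
      simpa [shiftState] using card_union_of_disjoint (hba s).symm
    rw [sum_range_succ, sum_range_succ _ (s + 1), ← ih, hcard, card_union_of_disjoint (hab _)]
    ring

theorem spencerWeight_shiftState_add {a b : ℕ → Finset α} (hab : ∀ j, Disjoint (a j) (b j))
    (hba : ∀ j, Disjoint (a j) (b (j + 1))) (t r : ℕ) :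
    spencerWeight t r (shiftState a b) + ∑ s ∈ range (t + 1), #(a s) * r.choose (t - s) =
      spencerWeight t r fun j => a j ∪ b j := by
  simp only [spencerWeight_eq_sum_choose_mul, ← sum_card_shiftState_add_card hab hba,
    mul_add, sum_add_distrib, mul_comm]

namespace Reachable

variable {v0 : ℕ → Finset α}

theorem shift_induction {motive : ∀ i v, Reachable v0 i v → Prop} (init : motive 0 v0 .init)
    (step : ∀ i v (a b : ℕ → Finset α) (h : Reachable v0 i v)
      (h' : Reachable v0 (i + 1) (shiftState a b)), (∀ j, Disjoint (a j) (b j)) →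
      (∀ j, a j ∪ b j = v j) → motive i v h → motive (i + 1) (shiftState a b) h')
    {i : ℕ} {v : ℕ → Finset α} (h : Reachable v0 i v) : motive i v h := by
  induction h with
  | init => exact init
  | @yes i v u h hu ih =>
    exact step i v (fun j => v j \ u j) u h (.yes h hu) (fun _ => sdiff_disjoint)
      (fun j => sdiff_union_of_subset (hu j)) ih
  | @no i v u h hu ih =>
    exact step i v u (fun j => v j \ u j) h (.no h hu) (fun _ => disjoint_sdiff)
      (fun j => union_sdiff_of_subset (hu j)) ih

theorem eq_empty {k : ℕ} (h0 : ∀ j, k < j → v0 j = ∅) {i : ℕ} {v : ℕ → Finset α}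
    (h : Reachable v0 i v) {j : ℕ} (hj : k + i < j) : v j = ∅ := by
  induction h using shift_induction generalizing j with
  | init => exact h0 j hj
  | step i v a b _ _ _ hv ih =>
    exact shiftState_eq_empty (k := k + i) (fun j hj => (hv j).trans (ih hj)) (by omega)

theorem pairwise_disjoint (h0 : Pairwise (Disjoint on v0)) {i : ℕ} {v : ℕ → Finset α}
    (h : Reachable v0 i v) : Pairwise (Disjoint on v) := by
  induction h using shift_induction with
  | init => exact h0
  | step i v a b _ _ hab hv ih =>
    obtain rfl : (fun j => a j ∪ b j) = v := funext hv
    exact pairwise_disjoint_shiftState hab ih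

end Reachable

theorem spencerWeight_initialState (t r : ℕ) (S : Finset α) :
    spencerWeight t r (initialState S) = #S * ∑ ℓ ∈ range (t + 1), r.choose ℓ := by
  rw [spencerWeight, sum_eq_single 0 (fun j _ hj => by simp [initialState, hj]) (by simp)]
  simp [initialState]

theorem Reachable.spencerWeight_modEq {t : ℕ} {S : Finset α} {i : ℕ} {v : ℕ → Finset α}
    (h : Reachable (initialState S) i v) (r : ℕ) :
    spencerWeight t r v ≡ #S * ∑ ℓ ∈ range (t + 1), r.choose ℓ
      [MOD (range i).gcd fun s => r.choose (t - s)] := by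
  induction h using Reachable.shift_induction with
  | init => rw [spencerWeight_initialState]
  | step i v a b hreach _ hab hv ih =>
    obtain rfl : (fun j => a j ∪ b j) = v := funext hv
    set A := (range (i + 1)).gcd fun s => r.choose (t - s)
    have hdisj := hreach.pairwise_disjoint (pairwise_disjoint_initialState S)
    have hba (j : ℕ) : Disjoint (a j) (b (j + 1)) :=
      (hdisj (by omega : j ≠ j + 1)).mono subset_union_left subset_union_right
    have hmoved : A ∣ ∑ s ∈ range (t + 1), #(a s) * r.choose (t - s) := by
      refine dvd_sum fun s _ => ?_
      rcases le_or_gt s i with hs | hs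
      · exact dvd_mul_of_dvd_right (gcd_dvd (mem_range.mpr (by omega))) _
      · have hempty := hreach.eq_empty (k := 0) (j := s) (fun _ hj => if_neg hj.ne') (by omega)
        simp [(union_eq_empty.mp hempty).1]
    have hstep : spencerWeight t r (shiftState a b) ≡ spencerWeight t r (fun j => a j ∪ b j)
        [MOD A] := by
      rw [← spencerWeight_shiftState_add hab hba]
      exact Nat.left_modEq_add_iff.mpr hmoved
    exact hstep.trans (ih.of_dvd (gcd_mono (range_subset_range.mpr (by omega))))

end

theorem spencer_weight_congruence_general {α : Type*} [DecidableEq α] (m t n : ℕ)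
    (S : Finset α) (hS : S.card = m)
    (i : ℕ) (v : ℕ → Finset α)
    (hv : Reachable (fun j => if j = 0 then S else ∅) i v) :
    spencerWeight t (n - i) v
      ≡ m * ∑ ℓ ∈ Finset.range (t + 1), (n - i).choose ℓ
        [MOD (Finset.range i).gcd (fun s => (n - i).choose (t - s))] :=
  hS ▸ Reachable.spencerWeight_modEq (S := S) hv (n - i)

/-- Congruence invariant of the Spencer weight: after `i` answers of an
`(m,t,n)`-game, with `A_{n-i} = gcd{C(n-i,t), …, C(n-i,t-i+1)}`, the Spencer
weight of any reachable state is congruent to `m · ∑_{ℓ=0}^t C(n-i,ℓ)` mod `A_{n-i}`. -/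
theorem spencer_weight_congruence {α : Type*} [DecidableEq α] (m t n : ℕ)
    (S : Finset α) (hS : S.card = m)
    (i : ℕ) (hi : i ≤ n) (v : ℕ → Finset α)
    (hv : Reachable (fun j => if j = 0 then S else ∅) i v) :
    spencerWeight t (n - i) v
      ≡ m * ∑ ℓ ∈ Finset.range (t + 1), (n - i).choose ℓ
        [MOD (Finset.range i).gcd (fun s => (n - i).choose (t - s))] :=
  spencer_weight_congruence_general m t n S hS i v hv
end
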